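/- arXiv:cs/0107026 — 8 statements merged into one kernel-verified Lean document; each statement's English description precedes it below -/
import Mathlib

section
/- If C is a consistent element of T² (i.e. C ≤ₖ -C), then for every B in T², (B ⊗ -C) ⊕ C = (B ⊕ C) ⊗ -C. -/
/-- Conflation on T² defined from a De Morgan complement on T. -/
def conf {T : Type*} (c : T → T) (p : T × T) : T × T := (c p.2, c p.1)

theorem consistent_revision_comm_general {T : Type*} [CompleteDistribLattice T]
    (c : T → T)
    (C : T × T) (hC : C ≤ conf c C) :
    ∀ B : T × T, (B ⊓ conf c C) ⊔ C = (B ⊔ C) ⊓ conf c C := by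
  intro B
  rw [sup_comm, sup_comm B, sup_inf_assoc_of_le B hC]

theorem consistent_revision_comm {T : Type*} [CompleteDistribLattice T]
    (c : T → T)
    (hinv : ∀ a, c (c a) = a)
    (hdm1 : ∀ a b : T, c (a ⊔ b) = c a ⊓ c b)
    (hdm2 : ∀ a b : T, c (a ⊓ b) = c a ⊔ c b)
    (C : T × T) (hC : C ≤ conf c C) :
    ∀ B : T × T, (B ⊓ conf c C) ⊔ C = (B ⊔ C) ⊓ conf c C :=
  consistent_revision_comm_general c C hC
end

section
/- A T²-valuation B is a model of an annotated revision program P (i.e. satisfies every rule of P) if and only if T_P^b(B) ≤ₖ B. -/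
namespace ARP

variable (U T : Type*)

/-- Revision atoms: `(true, a)` is `in(a)`, `(false, a)` is `out(a)`. -/
abbrev RevAtom := Bool × U
/-- Annotated revision atoms `(l : α)`. -/
abbrev AnnAtom := (RevAtom U) × T
/-- An annotated revision rule: a head and a list of body atoms. -/
abbrev Rule := AnnAtom U T × List (AnnAtom U T)
/-- An annotated revision program: a set of rules. -/
abbrev Program := Set (Rule U T)
/-- T-valuations of revision atoms. -/
abbrev TVal := RevAtom U → T
/-- T²-valuations of atoms, with the pointwise (knowledge) ordering. -/
abbrev Val := U → T × T

variable {U T} [CompleteDistribLattice T]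

/-- A T-valuation satisfies `(l : α)` iff `v l ≥ α`. -/
def satA (v : TVal U T) (q : AnnAtom U T) : Prop := q.2 ≤ v q.1

/-- The bijection θ⁻¹ from T²-valuations to T-valuations. -/
def thetaInv (B : Val U T) : TVal U T := fun l => if l.1 then (B l.2).1 else (B l.2).2

/-- The van Emden-Kowalski style operator on T-valuations. -/
def TP (P : Program U T) (v : TVal U T) : TVal U T :=
  fun l => sSup {α | ∃ r ∈ P, r.1 = (l, α) ∧ ∀ q ∈ r.2, satA v q}

/-- The operator `T_P^b = θ ∘ T_P ∘ θ⁻¹` on T²-valuations. -/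
def TPb (P : Program U T) (B : Val U T) : Val U T :=
  fun a => (TP P (thetaInv B) (true, a), TP P (thetaInv B) (false, a))

/-- Conflation on T², relative to a De Morgan complement `c` on T. -/
def conf (c : T → T) (p : T × T) : T × T := (c p.2, c p.1)

/-- Conflation extended pointwise to T²-valuations. -/
def confV (c : T → T) (B : Val U T) : Val U T := fun a => conf c (B a)

/-- `B` is a model of `P`: it satisfies every rule of `P`. -/
def isModel (P : Program U T) (B : Val U T) : Prop :=
  ∀ r ∈ P, (∀ q ∈ r.2, satA (thetaInv B) q) → satA (thetaInv B) r.1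

/-- `B` is an s-model of `P`. -/
def isSModel (c : T → T) (P : Program U T) (B : Val U T) : Prop :=
  TPb P B ≤ B ∧ B ≤ TPb P B ⊔ confV c (TPb P B)

/-- The relative pseudocomplement: the least `γ` with `α ⊔ γ ≥ β`. -/
def pcomp (α β : T) : T := sInf {γ | β ≤ α ⊔ γ}

/-- The reduct `P_{B_R}|B_I`. -/
def reduct (P : Program U T) (BR BI : Val U T) : Program U T :=
  { r' | ∃ r ∈ P, (∀ q ∈ r.2, satA (thetaInv BR) q) ∧
      r' = (r.1, r.2.map (fun q => (q.1, pcomp (thetaInv BI q.1) q.2))) }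

/-- The necessary change: the least (pre)fixpoint of `T_P^b`. -/
def NC (P : Program U T) : Val U T := sInf {B | TPb P B ≤ B}

/-- A T²-valuation is consistent if `B ≤ₖ -B`. -/
def consistentVal (c : T → T) (B : Val U T) : Prop := B ≤ confV c B

/-- `B_R` is a `P`-justified revision of `B_I`. -/
def JRev (c : T → T) (P : Program U T) (BI BR : Val U T) : Prop :=
  BR = (BI ⊓ confV c (NC (reduct P BR BI))) ⊔ NC (reduct P BR BI)

end ARP


namespace ARP

variable {U T : Type*} [CompleteDistribLattice T]

theorem thetaInv_le_thetaInv_iff {B B' : Val U T} : thetaInv B ≤ thetaInv B' ↔ B ≤ B' := by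
  simp only [Pi.le_def, Prod.le_def, Prod.forall, Bool.forall_bool, thetaInv, Bool.false_eq_true,
    if_true, if_false]
  exact ⟨fun ⟨hout, hin⟩ a => ⟨hin a, hout a⟩, fun h => ⟨fun a => (h a).2, fun a => (h a).1⟩⟩

theorem thetaInv_TPb (P : Program U T) (B : Val U T) : thetaInv (TPb P B) = TP P (thetaInv B) := by
  funext ⟨b, a⟩
  cases b <;> rfl

theorem TP_le_iff {P : Program U T} {v : TVal U T} :
    TP P v ≤ v ↔ ∀ r ∈ P, (∀ q ∈ r.2, satA v q) → satA v r.1 := by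
  simp only [Pi.le_def, TP, sSup_le_iff, Set.mem_ofPred_eq]
  constructor
  · rintro h ⟨⟨l, α⟩, body⟩ hr hbody
    exact h l α ⟨_, hr, rfl, hbody⟩
  · rintro h l α ⟨r, hr, hhead, hbody⟩
    simpa only [satA, hhead] using h r hr hbody

end ARP

theorem model_iff_TPb_le {U T : Type*} [CompleteDistribLattice T]
    (P : ARP.Program U T) (B : ARP.Val U T) :
    ARP.isModel P B ↔ ARP.TPb P B ≤ B := by
  rw [← ARP.thetaInv_le_thetaInv_iff, ARP.thetaInv_TPb, ARP.TP_le_iff]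
  rfl
end

section
/- A consistent T²-valuation B is an s-model of an annotated revision program P if and only if B is a model of P. -/
namespace ARP

theorem antitone_of_map_sup_eq_inf {L : Type*} [Lattice L] {c : L → L}
    (hdm : ∀ a b : L, c (a ⊔ b) = c a ⊓ c b) : Antitone c := fun a b hab => by
  rw [← sup_eq_right.mpr hab, hdm]
  exact inf_le_left

variable {U T : Type*} [CompleteDistribLattice T]

theorem confV_anti {c : T → T} (hc : Antitone c) {A B : Val U T} (h : A ≤ B) :
    confV c B ≤ confV c A :=
  fun a => ⟨hc (h a).2, hc (h a).1⟩

theorem consistentVal.le_confV_of_le {c : T → T} (hc : Antitone c) {A B : Val U T}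
    (hB : consistentVal c B) (h : A ≤ B) : B ≤ confV c A :=
  le_trans hB (confV_anti hc h)

theorem TPb_le_iff {P : Program U T} {B : Val U T} :
    TPb P B ≤ B ↔ TP P (thetaInv B) ≤ thetaInv B := by
  simp only [Pi.le_def, Prod.le_def, Bool.forall_bool, Prod.forall, TPb, thetaInv]
  simp [forall_and, and_comm]

theorem TPb_le_iff_isModel {P : Program U T} {B : Val U T} : TPb P B ≤ B ↔ isModel P B :=
  TPb_le_iff.trans TP_le_iff

end ARP

theorem consistent_smodel_iff_model_general {U T : Type*} [CompleteDistribLattice T]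
    (c : T → T)
    (hdm1 : ∀ a b : T, c (a ⊔ b) = c a ⊓ c b)
    (P : ARP.Program U T) (B : ARP.Val U T)
    (hcons : ARP.consistentVal c B) :
    ARP.isSModel c P B ↔ ARP.isModel P B := by
  rw [ARP.isSModel, ARP.TPb_le_iff_isModel.symm]
  refine ⟨And.left, fun hpre => ⟨hpre, ?_⟩⟩
  exact (hcons.le_confV_of_le (ARP.antitone_of_map_sup_eq_inf hdm1) hpre).trans le_sup_right

theorem consistent_smodel_iff_model {U T : Type*} [CompleteDistribLattice T]
    (c : T → T)
    (hinv : ∀ a, c (c a) = a)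
    (hdm1 : ∀ a b : T, c (a ⊔ b) = c a ⊓ c b)
    (hdm2 : ∀ a b : T, c (a ⊓ b) = c a ⊔ c b)
    (P : ARP.Program U T) (B : ARP.Val U T)
    (hcons : ARP.consistentVal c B) :
    ARP.isSModel c P B ↔ ARP.isModel P B :=
  consistent_smodel_iff_model_general c hdm1 P B hcons
end

section
/- In a complete infinitely distributive lattice T, the pseudocomplement operation distributes over joins in its second argument: pcomp(α,β₁) ∨ pcomp(α,β₂) = pcomp(α, β₁ ∨ β₂) for all α, β₁, β₂ ∈ T. -/
/-- The relative pseudocomplement: `pcomp α β = ⋀{γ | α ⊔ γ ≥ β}`. -/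
def pcomp {T : Type*} [CompleteLattice T] (α β : T) : T := sInf {γ | β ≤ α ⊔ γ}

theorem pcomp_eq_sdiff {T : Type*} [Order.Coframe T] (α β : T) : pcomp α β = β \ α :=
  le_antisymm (sInf_le le_sup_sdiff) (le_sInf fun _ h => sdiff_le_iff.2 h)

theorem pcomp_sup_distrib {T : Type*} [Order.Coframe T] (α β₁ β₂ : T) :
    pcomp α β₁ ⊔ pcomp α β₂ = pcomp α (β₁ ⊔ β₂) := by
  -- `· \ α` is left adjoint to `α ⊔ ·`, hence preserves joins.
  simp only [pcomp_eq_sdiff, sup_sdiff]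
end

section
/- If B_R is a P-justified revision of B_I, then B_R is an s-model of P; in particular B_R is a model of P. -/
/-!
A justified revision has the shape `B_R = (B_I ⊗ -C) ⊕ C` with `C = NC(P_{B_R}|B_I)`.
Once `C = T_P^b(B_R)` is known, this shape alone gives `C ≤ B_R ≤ C ⊕ -C`, and a prefixpoint
of `T_P^b` is a model.

For `C = T_P^b(B_R)`: the reduct only keeps rules of `P` whose body holds in `B_R`, so
`T^b` of the reduct is bounded by `T_P^b(B_R)` and hence so is its least fixpoint `C`.
Conversely `B_R ≤ B_I ⊕ C`, so every body atom `(l : β)` satisfied by `B_R` has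
`pcomp (B_I l) β ≤ C l`: each rule of `P` firing in `B_R` fires, as a reduct rule, in `C`.
-/

namespace ARP

variable {U T : Type*} [CompleteDistribLattice T]

theorem thetaInv_mono : Monotone (thetaInv : Val U T → TVal U T) := by
  rintro B₁ B₂ h ⟨b, a⟩
  cases b
  exacts [(h a).2, (h a).1]

theorem thetaInv_sup (A B : Val U T) : thetaInv (A ⊔ B) = thetaInv A ⊔ thetaInv B := by
  funext ⟨b, a⟩
  cases b <;> rfl

theorem TP_mono (P : Program U T) : Monotone (TP P) := by
  intro v₁ v₂ h l
  refine sSup_le_sSup ?_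
  rintro α ⟨r, hr, hhead, hbody⟩
  exact ⟨r, hr, hhead, fun q hq => (hbody q hq).trans (h q.1)⟩

theorem TPb_mono (P : Program U T) : Monotone (TPb P) := fun _ _ h _ =>
  ⟨TP_mono P (thetaInv_mono h) _, TP_mono P (thetaInv_mono h) _⟩

-- `NC Q` is by definition `OrderHom.lfp` of `TPb Q`.
theorem TPb_NC_le (Q : Program U T) : TPb Q (NC Q) ≤ NC Q :=
  (OrderHom.map_lfp ⟨TPb Q, TPb_mono Q⟩).le

theorem le_TP {P : Program U T} {v : TVal U T} {r : Rule U T} (hr : r ∈ P)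
    (hbody : ∀ q ∈ r.2, satA v q) : r.1.2 ≤ TP P v r.1.1 :=
  le_sSup ⟨r, hr, rfl, hbody⟩

theorem isModel_of_TPb_le {P : Program U T} {B : Val U T} (hB : TPb P B ≤ B) :
    isModel P B := fun r hr hbody =>
  (le_TP hr hbody).trans <| by
    rw [← thetaInv_TPb]
    exact thetaInv_mono hB _

theorem isSModel_of_eq_sup {c : T → T} {P : Program U T} {A B : Val U T}
    (hB : B = A ⊓ confV c (TPb P B) ⊔ TPb P B) : isSModel c P B :=
  ⟨le_of_le_of_eq le_sup_right hB.symm,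
    hB.le.trans (sup_le (inf_le_right.trans le_sup_right) le_sup_left)⟩

theorem pcomp_le {α β γ : T} (h : β ≤ α ⊔ γ) : pcomp α β ≤ γ :=
  sInf_le h

theorem TP_reduct_le (P : Program U T) (BR BI : Val U T) (v : TVal U T) :
    TP (reduct P BR BI) v ≤ TP P (thetaInv BR) := by
  intro l
  refine sSup_le ?_
  rintro α ⟨_, ⟨r, hr, hbody, rfl⟩, hhead, -⟩
  exact le_sSup ⟨r, hr, hhead, hbody⟩

theorem NC_reduct_le_TPb (P : Program U T) (BR BI : Val U T) :
    NC (reduct P BR BI) ≤ TPb P BR :=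
  sInf_le fun _ => ⟨TP_reduct_le P BR BI _ _, TP_reduct_le P BR BI _ _⟩

theorem TP_le_TP_reduct {P : Program U T} {BR BI : Val U T} {v : TVal U T}
    (h : thetaInv BR ≤ thetaInv BI ⊔ v) : TP P (thetaInv BR) ≤ TP (reduct P BR BI) v := by
  intro l
  refine sSup_le ?_
  rintro α ⟨r, hr, hhead, hbody⟩
  refine le_sSup ⟨_, ⟨r, hr, hbody, rfl⟩, hhead, ?_⟩
  simp only [List.mem_map]
  rintro _ ⟨q, hq, rfl⟩
  exact pcomp_le ((hbody q hq).trans (h q.1))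

theorem TPb_le_of_le_sup {P : Program U T} {BR BI C : Val U T} (hBR : BR ≤ BI ⊔ C)
    (hC : TPb (reduct P BR BI) C ≤ C) : TPb P BR ≤ C := by
  have hθ : thetaInv BR ≤ thetaInv BI ⊔ thetaInv C := thetaInv_sup BI C ▸ thetaInv_mono hBR
  have hTP : TP P (thetaInv BR) ≤ thetaInv C :=
    calc TP P (thetaInv BR) ≤ TP (reduct P BR BI) (thetaInv C) := TP_le_TP_reduct hθ
      _ = thetaInv (TPb (reduct P BR BI) C) := (thetaInv_TPb _ _).symm
      _ ≤ thetaInv C := thetaInv_mono hC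
  exact fun a => ⟨hTP (true, a), hTP (false, a)⟩

theorem NC_reduct_eq_TPb_of_JRev {c : T → T} {P : Program U T} {BI BR : Val U T}
    (h : JRev c P BI BR) : NC (reduct P BR BI) = TPb P BR :=
  le_antisymm (NC_reduct_le_TPb P BR BI)
    (TPb_le_of_le_sup (h.le.trans (sup_le_sup_right inf_le_left _)) (TPb_NC_le _))

end ARP

theorem jrev_isSModel_general {U T : Type*} [CompleteDistribLattice T]
    (c : T → T)
    (P : ARP.Program U T) (BI BR : ARP.Val U T)
    (h : ARP.JRev c P BI BR) :
    ARP.isSModel c P BR ∧ ARP.isModel P BR := by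
  have hBR : BR = BI ⊓ ARP.confV c (ARP.TPb P BR) ⊔ ARP.TPb P BR := by
    rw [← ARP.NC_reduct_eq_TPb_of_JRev h]
    exact h
  have hS : ARP.isSModel c P BR := ARP.isSModel_of_eq_sup hBR
  exact ⟨hS, ARP.isModel_of_TPb_le hS.1⟩

theorem jrev_isSModel {U T : Type*} [CompleteDistribLattice T]
    (c : T → T)
    (hinv : ∀ a, c (c a) = a)
    (hdm1 : ∀ a b : T, c (a ⊔ b) = c a ⊓ c b)
    (hdm2 : ∀ a b : T, c (a ⊓ b) = c a ⊔ c b)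
    (P : ARP.Program U T) (BI BR : ARP.Val U T)
    (h : ARP.JRev c P BI BR) :
    ARP.isSModel c P BR ∧ ARP.isModel P BR :=
  jrev_isSModel_general c P BI BR h
end

section
/- For any annotated revision program P and any T²-valuation B, the necessary change of the reduct of P with respect to (B, B) equals T_P^b(B): NC(P_B|B) = T_P^b(B). -/
namespace ARP

variable {U T : Type*} [CompleteDistribLattice T]

theorem pcomp_eq_bot_of_le {α β : T} (h : β ≤ α) : pcomp α β = ⊥ :=
  le_bot_iff.mp (sInf_le (le_sup_of_le_left h))

theorem thetaInv_mono_s12 {B C : Val U T} (h : B ≤ C) : thetaInv B ≤ thetaInv C := by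
  rintro ⟨_ | _, a⟩
  exacts [(h a).2, (h a).1]

/-- When `BR ≤ BI`, every body atom of a rule surviving in the reduct is annotated by `⊥`,
so it is satisfied by any `v`. -/
theorem TP_reduct_of_le (P : Program U T) {BR BI : Val U T} (h : BR ≤ BI) (v : TVal U T) :
    TP (reduct P BR BI) v = TP P (thetaInv BR) := by
  funext l
  refine congrArg sSup (Set.ext fun α => ⟨?_, ?_⟩)
  · rintro ⟨_, ⟨r, hr, hsat, rfl⟩, hhead, -⟩
    exact ⟨r, hr, hhead, hsat⟩
  · rintro ⟨r, hr, hhead, hsat⟩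
    refine ⟨_, ⟨r, hr, hsat, rfl⟩, hhead, ?_⟩
    simp only [List.mem_map, forall_exists_index, and_imp]
    rintro _ q hq rfl
    simp only [satA, pcomp_eq_bot_of_le ((hsat q hq).trans (thetaInv_mono_s12 h q.1)), bot_le]

theorem TPb_reduct_of_le (P : Program U T) {BR BI : Val U T} (h : BR ≤ BI) (C : Val U T) :
    TPb (reduct P BR BI) C = TPb P BR := by
  unfold TPb
  rw [TP_reduct_of_le P h]

theorem NC_eq_of_TPb_const {Q : Program U T} {D : Val U T} (hQ : ∀ C, TPb Q C = D) :
    NC Q = D := by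
  simp only [NC, hQ]
  exact csInf_Ici

end ARP

theorem NC_reduct_self {U T : Type*} [CompleteDistribLattice T]
    (P : ARP.Program U T) (B : ARP.Val U T) :
    ARP.NC (ARP.reduct P B B) = ARP.TPb P B :=
  ARP.NC_eq_of_TPb_const (ARP.TPb_reduct_of_le P le_rfl)
end

section
/- Let B_I be a model of annotated revision program P and B_R a P-justified revision of B_I. Then B_R ≤ₖ B_I. -/
/-!
A model `B_I` of `P` is also a model of the reduct `P_{B_R}|B_I`: a reduct body atom `(l : pcomp (B_I l) α)`
holds in `B_I` only if `(l : α)` does. So the least model `C` of the reduct lies below `B_I`,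
and therefore so does `B_R = (B_I ⊓ -C) ⊔ C`.
-/

namespace ARP

variable (U T : Type*)

variable {U T} [CompleteDistribLattice T]

theorem le_sup_pcomp (α β : T) : β ≤ α ⊔ pcomp α β := by
  rw [pcomp, sup_sInf_eq]
  exact le_iInf₂ fun _ hγ => hγ

theorem le_of_pcomp_le {α β : T} (h : pcomp α β ≤ α) : β ≤ α :=
  (le_sup_pcomp α β).trans (sup_le le_rfl h)

theorem isModel.reduct {P : Program U T} {BI : Val U T} (hmod : isModel P BI) (BR : Val U T) :
    isModel (reduct P BR BI) BI := by
  rintro _ ⟨r, hr, -, rfl⟩ hbody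
  refine hmod r hr fun q hq => le_of_pcomp_le ?_
  exact hbody _ (List.mem_map_of_mem hq)

theorem TP_le_of_isModel {P : Program U T} {B : Val U T} (hmod : isModel P B) (l : RevAtom U) :
    TP P (thetaInv B) l ≤ thetaInv B l := by
  refine sSup_le ?_
  rintro α ⟨r, hr, hhead, hbody⟩
  simpa only [satA, hhead] using hmod r hr hbody

theorem TPb_le_of_isModel {P : Program U T} {B : Val U T} (hmod : isModel P B) :
    TPb P B ≤ B :=
  fun a => ⟨TP_le_of_isModel hmod (true, a), TP_le_of_isModel hmod (false, a)⟩

theorem NC_le_of_isModel {P : Program U T} {B : Val U T} (hmod : isModel P B) : NC P ≤ B :=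
  sInf_le (TPb_le_of_isModel hmod)

end ARP

theorem jrev_le_model_general {U T : Type*} [CompleteDistribLattice T]
    (c : T → T)
    (P : ARP.Program U T) (BI BR : ARP.Val U T)
    (hmod : ARP.isModel P BI) (h : ARP.JRev c P BI BR) :
    BR ≤ BI := by
  rw [h]
  exact sup_le inf_le_left (ARP.NC_le_of_isModel (hmod.reduct BR))

theorem jrev_le_model {U T : Type*} [CompleteDistribLattice T]
    (c : T → T)
    (hinv : ∀ a, c (c a) = a)
    (hdm1 : ∀ a b : T, c (a ⊔ b) = c a ⊓ c b)
    (hdm2 : ∀ a b : T, c (a ⊓ b) = c a ⊔ c b)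
    (P : ARP.Program U T) (BI BR : ARP.Val U T)
    (hmod : ARP.isModel P BI) (h : ARP.JRev c P BI BR) :
    BR ≤ BI :=
  jrev_le_model_general c P BI BR hmod h
end

section
/- Let R, B be T²-valuations and suppose the set S = {C | R = (B ⊗ -C) ⊕ C} is nonempty. Then ⊓S ∈ S; that is, the pointwise meet of all C transforming B into R itself transforms B into R, so diff(R,B) is the least such C. -/
/-!
Conflation is an involutive antitone map on the complete distributive lattice of valuations, so it
turns the meet of a family into the join of the conflations (De Morgan). If every `C` in `S` satisfies
`R = (B ⊓ -C) ⊔ C`, then `R` lies below each `(B ⊓ ⨆ -C) ⊔ C`, hence below their meet, which is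
`(B ⊓ -(⨅ C)) ⊔ ⨅ C` by distributivity; conversely `B ⊓ ⨆ -C = ⨆ (B ⊓ -C) ≤ R` and `⨅ C ≤ R`.
-/

/-- Conflation on T² from a De Morgan complement `c`, extended pointwise. -/
def confV {U T : Type*} (c : T → T) (B : U → T × T) : U → T × T :=
  fun a => (c (B a).2, c (B a).1)

theorem Function.Involutive.map_iInf_of_antitone {α ι : Type*} [CompleteLattice α] {c : α → α}
    (hinv : Function.Involutive c) (hanti : Antitone c) (f : ι → α) :
    c (⨅ i, f i) = ⨆ i, c (f i) := by
  refine le_antisymm ?_ hanti.le_map_iInf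
  calc c (⨅ i, f i) ≤ c (c (⨆ i, c (f i))) :=
        hanti (le_iInf fun i => (hanti (le_iSup (fun j => c (f j)) i)).trans_eq (hinv _))
    _ = ⨆ i, c (f i) := hinv _

theorem eq_inf_iSup_sup_iInf {α ι : Type*} [CompleteDistribLattice α] [Nonempty ι]
    {r b : α} {x z : ι → α} (h : ∀ i, r = (b ⊓ z i) ⊔ x i) :
    r = (b ⊓ ⨆ i, z i) ⊔ ⨅ i, x i := by
  refine le_antisymm ?_ (sup_le ?_ ?_)
  · rw [sup_iInf_eq]
    exact le_iInf fun i => (h i).le.trans (sup_le_sup_right (inf_le_inf_left b (le_iSup z i)) _)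
  · rw [inf_iSup_eq]
    exact iSup_le fun i => (h i).ge.trans' le_sup_left
  · obtain ⟨i⟩ := ‹Nonempty ι›
    exact (iInf_le x i).trans ((h i).ge.trans' le_sup_right)

section confV

variable {U T : Type*} {c : T → T}

theorem confV_involutive (hc : Function.Involutive c) : Function.Involutive (confV (U := U) c) :=
  fun _ => funext fun _ => Prod.ext (hc _) (hc _)

theorem confV_antitone [Preorder T] (hc : Antitone c) : Antitone (confV (U := U) c) :=
  fun _ _ h a => ⟨hc (h a).2, hc (h a).1⟩

end confV

theorem diff_least {U T : Type*} [CompleteDistribLattice T]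
    (c : T → T)
    (hinv : ∀ a, c (c a) = a)
    (hanti : ∀ a b : T, a ≤ b → c b ≤ c a)
    (R B : U → T × T)
    (S : Set (U → T × T)) (hS : S = {C | R = (B ⊓ confV c C) ⊔ C})
    (hne : S.Nonempty) :
    sInf S ∈ S := by
  subst hS
  have := hne.to_subtype
  show R = (B ⊓ confV c (sInf _)) ⊔ sInf _
  rw [sInf_eq_iInf', (confV_involutive hinv).map_iInf_of_antitone
    (confV_antitone fun a b => hanti a b)]
  exact eq_inf_iSup_sup_iInf fun C => C.2
end
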